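/- arXiv:1110.6230 — 3 statements merged into one kernel-verified Lean document; each statement's English description precedes it below -/
import Mathlib

section
/- Let α_d = d·I_{1/2}(1/(d−2), (d−1)/(d−2)) − (d−1) for integers d ≥ 3, where I_x(a,b) is the regularized incomplete beta function. Then lim_{d→∞} α_d = 1 − ln 2. -/
/-!
Put `a = 1 / (d - 2)`, so that `d = 2 + 1 / a` and `(d - 1) / (d - 2) = 1 + a`. The reflection
`I_x(a, b) + I_{1-x}(b, a) = 1` (the complete beta integral is `Γ(a)Γ(b)/Γ(a+b)`) turns `α_d`
into `1 - d · I_{1/2}(1 + a, a)`, and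
`I_{1/2}(1 + a, a) = a · Γ(2a+1)/Γ(1+a)² · ∫₀^{1/2} t^a (1-t)^(a-1) dt`.
As `a → 0⁺`, `d · a → 1`, the Gamma quotient tends to `1`, and by dominated convergence the
integral tends to `∫₀^{1/2} dt / (1 - t) = log 2`.
-/

open Real

/-- The regularized incomplete beta function `I_x(a,b)`. -/
noncomputable def regIncBeta (x a b : ℝ) : ℝ :=
  (Real.Gamma (a + b) / (Real.Gamma a * Real.Gamma b)) *
    ∫ t in (0:ℝ)..x, t ^ (a - 1) * (1 - t) ^ (b - 1)

open MeasureTheory Filter Topology Set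

lemma ofReal_rpow_mul_one_sub_rpow {a b t : ℝ} (ht : t ∈ Icc (0 : ℝ) 1) :
    ((t ^ (a - 1) * (1 - t) ^ (b - 1) : ℝ) : ℂ)
      = (t : ℂ) ^ ((a : ℂ) - 1) * (1 - (t : ℂ)) ^ ((b : ℂ) - 1) := by
  rw [Complex.ofReal_mul, Complex.ofReal_cpow ht.1, Complex.ofReal_cpow (sub_nonneg.2 ht.2)]
  push_cast
  rfl

lemma intervalIntegrable_rpow_mul_one_sub_rpow {a b : ℝ} (ha : 0 < a) (hb : 0 < b) :
    IntervalIntegrable (fun t : ℝ => t ^ (a - 1) * (1 - t) ^ (b - 1)) volume 0 1 := by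
  have hC : IntegrableOn _ (Ioc (0 : ℝ) 1) :=
    (Complex.betaIntegral_convergent (u := a) (v := b) (by simpa) (by simpa)).1.re
  rw [intervalIntegrable_iff_integrableOn_Ioc_of_le zero_le_one]
  refine hC.congr_fun (fun t ht => ?_) measurableSet_Ioc
  simp only [← ofReal_rpow_mul_one_sub_rpow (Ioc_subset_Icc_self ht), RCLike.re_to_complex,
    Complex.ofReal_re]

lemma integral_rpow_mul_one_sub_rpow {a b : ℝ} (ha : 0 < a) (hb : 0 < b) :
    ∫ t in (0 : ℝ)..1, t ^ (a - 1) * (1 - t) ^ (b - 1) = Gamma a * Gamma b / Gamma (a + b) := by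
  have hB : Complex.betaIntegral a b
      = ((∫ t in (0 : ℝ)..1, t ^ (a - 1) * (1 - t) ^ (b - 1) : ℝ) : ℂ) := by
    rw [Complex.betaIntegral, ← intervalIntegral.integral_ofReal]
    refine intervalIntegral.integral_congr fun t ht => ?_
    rw [uIcc_of_le zero_le_one] at ht
    exact (ofReal_rpow_mul_one_sub_rpow ht).symm
  have h := Complex.Gamma_mul_Gamma_eq_betaIntegral (s := a) (t := b) (by simpa) (by simpa)
  rw [hB, ← Complex.ofReal_add, Complex.Gamma_ofReal, Complex.Gamma_ofReal,
    Complex.Gamma_ofReal] at h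
  rw [eq_div_iff (Gamma_pos_of_pos (add_pos ha hb)).ne']
  exact_mod_cast (mul_comm _ _).trans h.symm

lemma regIncBeta_add_regIncBeta_one_sub {x a b : ℝ} (hx₀ : 0 ≤ x) (hx₁ : x ≤ 1) (ha : 0 < a)
    (hb : 0 < b) : regIncBeta x a b + regIncBeta (1 - x) b a = 1 := by
  set f : ℝ → ℝ := fun t => t ^ (a - 1) * (1 - t) ^ (b - 1)
  have hf := intervalIntegrable_rpow_mul_one_sub_rpow ha hb
  have hreflect :
      ∫ t in (0 : ℝ)..1 - x, t ^ (b - 1) * (1 - t) ^ (a - 1) = ∫ t in x..1, f t := by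
    simpa [f, mul_comm] using intervalIntegral.integral_comp_sub_left (a := 0) (b := 1 - x) f 1
  have hsplit : (∫ t in (0 : ℝ)..x, f t) + ∫ t in x..1, f t = ∫ t in (0 : ℝ)..1, f t :=
    intervalIntegral.integral_add_adjacent_intervals
      (hf.mono_set (uIcc_subset_uIcc_left (by simp [uIcc_of_le, hx₀, hx₁])))
      (hf.mono_set (uIcc_subset_uIcc_right (by simp [uIcc_of_le, hx₀, hx₁])))
  rw [regIncBeta, regIncBeta, hreflect, add_comm b a, mul_comm (Gamma b), ← mul_add, hsplit,
    integral_rpow_mul_one_sub_rpow ha hb]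
  field_simp [(Gamma_pos_of_pos (add_pos ha hb)).ne']

lemma regIncBeta_one_add_self (x : ℝ) {a : ℝ} (ha : 0 < a) :
    regIncBeta x (1 + a) a
      = a * (Gamma (2 * a + 1) / Gamma (1 + a) ^ 2)
          * ∫ t in (0 : ℝ)..x, t ^ a * (1 - t) ^ (a - 1) := by
  have hΓ : Gamma (1 + a) = a * Gamma a := by rw [add_comm, Gamma_add_one ha.ne']
  rw [regIncBeta, add_sub_cancel_left, show 1 + a + a = 2 * a + 1 by ring, hΓ]
  field_simp [(Gamma_pos_of_pos ha).ne']

lemma integral_inv_one_sub {x : ℝ} (hx : x < 1) :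
    ∫ t in (0 : ℝ)..x, (1 - t)⁻¹ = -log (1 - x) := by
  rw [intervalIntegral.integral_comp_sub_left (fun t => t⁻¹), sub_zero,
    integral_inv (by simp [uIcc, hx, hx.le]), one_div, log_inv]

lemma tendsto_integral_rpow_mul_one_sub_rpow_sub_one {x : ℝ} (hx₀ : 0 ≤ x) (hx₁ : x < 1) :
    Tendsto (fun a : ℝ => ∫ t in (0 : ℝ)..x, t ^ a * (1 - t) ^ (a - 1)) (𝓝[>] 0)
      (𝓝 (-log (1 - x))) := by
  rw [← integral_inv_one_sub hx₁]
  refine intervalIntegral.tendsto_integral_filter_of_dominated_convergence (fun _ => (1 - x)⁻¹)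
    (Eventually.of_forall fun a => by fun_prop) ?_ intervalIntegrable_const ?_
  · filter_upwards [Ioc_mem_nhdsGT zero_lt_one] with a ⟨ha₀, ha₁⟩
    refine ae_of_all _ fun t ht => ?_
    rw [uIoc_of_le hx₀] at ht
    have h₁ : 0 < 1 - t := by linarith [ht.2]
    have hleft : t ^ a ≤ 1 := rpow_le_one ht.1.le (by linarith [ht.2]) ha₀.le
    have hright : (1 - t) ^ (a - 1) ≤ (1 - x)⁻¹ :=
      calc (1 - t) ^ (a - 1) ≤ (1 - t) ^ (-1 : ℝ) :=
            rpow_le_rpow_of_exponent_ge h₁ (by linarith [ht.1]) (by linarith)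
        _ ≤ (1 - x)⁻¹ := by
            rw [rpow_neg_one]
            exact inv_anti₀ (by linarith) (by linarith [ht.2])
    have hright₀ : 0 ≤ (1 - t) ^ (a - 1) := rpow_nonneg h₁.le _
    rw [norm_of_nonneg (mul_nonneg (rpow_nonneg ht.1.le _) hright₀)]
    simpa using mul_le_mul hleft hright hright₀ zero_le_one
  · refine ae_of_all _ fun t ht => ?_
    rw [uIoc_of_le hx₀] at ht
    have h₁ : 0 < 1 - t := by linarith [ht.2]
    have hcont : ContinuousAt (fun a : ℝ => t ^ a * (1 - t) ^ (a - 1)) 0 :=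
      (continuousAt_const_rpow ht.1.ne').mul
        ((continuousAt_const_rpow h₁.ne').comp (continuousAt_id.sub continuousAt_const))
    simpa [rpow_neg_one] using hcont.tendsto.mono_left nhdsWithin_le_nhds

lemma tendsto_Gamma_two_mul_add_one_div_sq :
    Tendsto (fun a : ℝ => Gamma (2 * a + 1) / Gamma (1 + a) ^ 2) (𝓝 0) (𝓝 1) := by
  have hΓ : ContinuousAt Gamma 1 :=
    (differentiableOn_Gamma_Ioi.differentiableAt (Ioi_mem_nhds one_pos)).continuousAt
  have hnum : ContinuousAt (fun a : ℝ => Gamma (2 * a + 1)) 0 :=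
    hΓ.comp_of_eq (by fun_prop) (by norm_num)
  have hden : ContinuousAt (fun a : ℝ => Gamma (1 + a)) 0 :=
    hΓ.comp_of_eq (by fun_prop) (by norm_num)
  have hratio : ContinuousAt (fun a : ℝ => Gamma (2 * a + 1) / Gamma (1 + a) ^ 2) 0 :=
    hnum.div (hden.pow 2) (by simp [Gamma_one])
  simpa [Gamma_one] using hratio.tendsto

lemma tendsto_regIncBeta_one_add_self_div {x : ℝ} (hx₀ : 0 ≤ x) (hx₁ : x < 1) :
    Tendsto (fun a => regIncBeta x (1 + a) a / a) (𝓝[>] 0) (𝓝 (-log (1 - x))) := by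
  have hlim := (tendsto_Gamma_two_mul_add_one_div_sq.mono_left nhdsWithin_le_nhds).mul
    (tendsto_integral_rpow_mul_one_sub_rpow_sub_one hx₀ hx₁)
  rw [one_mul] at hlim
  refine hlim.congr' (eventually_nhdsWithin_of_forall fun a (ha : 0 < a) => ?_)
  dsimp only
  rw [regIncBeta_one_add_self x ha, mul_assoc, mul_div_cancel_left₀ _ ha.ne']

lemma tendsto_one_div_natCast_sub_two :
    Tendsto (fun d : ℕ => 1 / ((d : ℝ) - 2)) atTop (𝓝[>] 0) := by
  simpa [one_div, Function.comp_def, sub_eq_add_neg] using tendsto_inv_atTop_nhdsGT_zero.comp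
    (tendsto_atTop_add_const_right atTop (-2) tendsto_natCast_atTop_atTop)

/-- `α_d = d·I_{1/2}(1/(d−2), (d−1)/(d−2)) − (d−1)` tends to `1 − ln 2` as `d → ∞`. -/
theorem alpha_tendsto_one_sub_log_two :
    Filter.Tendsto
      (fun d : ℕ =>
        (d : ℝ) * regIncBeta (1/2) (1 / ((d : ℝ) - 2)) (((d : ℝ) - 1) / ((d : ℝ) - 2))
          - ((d : ℝ) - 1))
      Filter.atTop (nhds (1 - Real.log 2)) := by
  have hJ := (tendsto_regIncBeta_one_add_self_div (x := 1 / 2) (by norm_num) (by norm_num)).comp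
    tendsto_one_div_natCast_sub_two
  have hdiv : Tendsto (fun d : ℕ => (d : ℝ) / ((d : ℝ) - 2)) atTop (𝓝 1) := by
    simpa only [← sub_eq_add_neg] using tendsto_natCast_div_add_atTop (-2 : ℝ)
  have hlim := tendsto_const_nhds (x := (1 : ℝ)).sub (hdiv.mul hJ)
  have hlog : -log (1 - 1 / 2 : ℝ) = log 2 := by
    rw [show (1 : ℝ) - 1 / 2 = 2⁻¹ by norm_num, log_inv, neg_neg]
  rw [one_mul, hlog] at hlim
  refine hlim.congr' ?_
  filter_upwards [eventually_gt_atTop 2] with d hd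
  have hd₂ : (0 : ℝ) < d - 2 := by
    rw [sub_pos]
    exact_mod_cast hd
  have hb : ((d : ℝ) - 1) / (d - 2) = 1 + 1 / (d - 2) := by field_simp; ring
  have hsymm := regIncBeta_add_regIncBeta_one_sub (x := 1 / 2) (a := 1 / ((d : ℝ) - 2))
    (b := 1 + 1 / ((d : ℝ) - 2)) (by norm_num) (by norm_num) (by positivity) (by positivity)
  rw [show (1 : ℝ) - 1 / 2 = 1 / 2 by norm_num] at hsymm
  rw [Function.comp_apply, hb, eq_sub_of_add_eq hsymm]
  generalize regIncBeta (1 / 2) (1 + 1 / ((d : ℝ) - 2)) (1 / ((d : ℝ) - 2)) = J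
  field_simp
  ring
end

section
/- For all integers d ≥ 3 and k ≥ 2, the expression P_k = I_{1/2}(k−1+1/(d−2), 1+1/(d−2)) + (d−1)(I_{1/2}(1/(d−2), k+1/(d−2)) − 1) satisfies P_k ≤ 4e²·k(k+1)/(k−1)·(1/2)^{k−1}. -/
/-!
The second term is nonpositive because `I_x(a, b) ≤ 1` for `x ≤ 1`. For the first term write
`I_x(u, v) = (∫₀ˣ t^(u-1) (1-t)^(v-1) dt) / B(u, v)` with `u = k - 1 + ε`, `v = 1 + ε`,
`ε = 1/(d-2) ∈ (0, 1]`. Since `v ≥ 1`, the numerator is at most `∫₀ˣ t^(u-1) dt = xᵘ/u`; since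
`v ≤ 2` and `B(u, ·)` is antitone, `B(u, v) ≥ B(u, 2) = 1/(u(u+1))`. Hence
`I_{1/2}(u, v) ≤ (u+1) 2^(-u) ≤ (k+1) 2^(1-k)`, which is far below the stated bound.
-/

open Real

open MeasureTheory Set ProbabilityTheory

lemma Complex.ofReal_rpow_mul_one_sub_rpow {t : ℝ} (ht₀ : 0 ≤ t) (ht₁ : t ≤ 1) (u v : ℝ) :
    ((t ^ (u - 1) * (1 - t) ^ (v - 1) : ℝ) : ℂ) =
      (t : ℂ) ^ ((u : ℂ) - 1) * (1 - (t : ℂ)) ^ ((v : ℂ) - 1) := by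
  rw [Complex.ofReal_mul, Complex.ofReal_cpow ht₀, Complex.ofReal_cpow (sub_nonneg.2 ht₁)]
  push_cast
  ring

lemma intervalIntegrable_rpow_mul_one_sub_rpow_s7 {u v : ℝ} (hu : 0 < u) (hv : 0 < v) :
    IntervalIntegrable (fun t : ℝ ↦ t ^ (u - 1) * (1 - t) ^ (v - 1)) volume 0 1 := by
  have hc := Complex.betaIntegral_convergent (u := u) (v := v) (by simpa) (by simpa)
  rw [intervalIntegrable_iff_integrableOn_Ioc_of_le zero_le_one] at hc ⊢
  have hreal :
      IntegrableOn (fun t : ℝ ↦ ((t ^ (u - 1) * (1 - t) ^ (v - 1) : ℝ) : ℂ)) (Ioc 0 1) :=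
    hc.congr_fun (fun t ht ↦ (Complex.ofReal_rpow_mul_one_sub_rpow ht.1.le ht.2 u v).symm)
      measurableSet_Ioc
  simpa [IntegrableOn] using hreal.re

lemma ProbabilityTheory.beta_eq_integral {u v : ℝ} (hu : 0 < u) (hv : 0 < v) :
    beta u v = ∫ t in (0:ℝ)..1, t ^ (u - 1) * (1 - t) ^ (v - 1) := by
  rw [beta_eq_betaIntegralReal u v hu hv, Complex.betaIntegral, ← Complex.ofReal_re
    (∫ t in (0:ℝ)..1, _), ← intervalIntegral.integral_ofReal]
  congr 1
  refine intervalIntegral.integral_congr fun t ht ↦ ?_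
  rw [uIcc_of_le zero_le_one] at ht
  exact (Complex.ofReal_rpow_mul_one_sub_rpow ht.1 ht.2 u v).symm

lemma ProbabilityTheory.beta_le_beta_of_le_right {u v w : ℝ} (hu : 0 < u) (hv : 0 < v)
    (hvw : v ≤ w) : beta u w ≤ beta u v := by
  rw [beta_eq_integral hu (hv.trans_le hvw), beta_eq_integral hu hv]
  refine intervalIntegral.integral_mono_on_of_le_Ioo zero_le_one
    (intervalIntegrable_rpow_mul_one_sub_rpow_s7 hu (hv.trans_le hvw))
    (intervalIntegrable_rpow_mul_one_sub_rpow_s7 hu hv) fun t ht ↦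
      mul_le_mul_of_nonneg_left
        (rpow_le_rpow_of_exponent_ge (by linarith [ht.2]) (by linarith [ht.1]) (by linarith))
        (rpow_pos_of_pos ht.1 _).le

lemma ProbabilityTheory.beta_two_right {u : ℝ} (hu : 0 < u) : beta u 2 = (u * (u + 1))⁻¹ := by
  have hΓ : Gamma (u + 2) = (u + 1) * u * Gamma u := by
    rw [show u + 2 = u + 1 + 1 by ring, Gamma_add_one (by positivity), Gamma_add_one hu.ne']
    ring
  rw [beta, hΓ, Gamma_two]
  field_simp [(Gamma_pos_of_pos hu).ne']

lemma regIncBeta_eq_div_beta (x a b : ℝ) :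
    regIncBeta x a b = (∫ t in (0:ℝ)..x, t ^ (a - 1) * (1 - t) ^ (b - 1)) / beta a b := by
  rw [regIncBeta, beta, div_div_eq_mul_div]
  ring

lemma regIncBeta_le_one {x a b : ℝ} (hx₀ : 0 ≤ x) (hx₁ : x ≤ 1) (ha : 0 < a) (hb : 0 < b) :
    regIncBeta x a b ≤ 1 := by
  rw [regIncBeta_eq_div_beta, div_le_one (beta_pos ha hb), beta_eq_integral ha hb]
  refine intervalIntegral.integral_mono_interval le_rfl hx₀ hx₁ ?_
    (intervalIntegrable_rpow_mul_one_sub_rpow_s7 ha hb)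
  filter_upwards [ae_restrict_mem measurableSet_Ioc] with t ht
  exact mul_nonneg (rpow_nonneg ht.1.le _) (rpow_nonneg (by linarith [ht.2]) _)

lemma integral_rpow_mul_one_sub_rpow_le {x u v : ℝ} (hx₀ : 0 ≤ x) (hx₁ : x ≤ 1) (hu : 0 < u)
    (hv : 1 ≤ v) : ∫ t in (0:ℝ)..x, t ^ (u - 1) * (1 - t) ^ (v - 1) ≤ x ^ u / u := by
  have hint : IntervalIntegrable (fun t : ℝ ↦ t ^ (u - 1) * (1 - t) ^ (v - 1)) volume 0 x :=
    (intervalIntegrable_rpow_mul_one_sub_rpow_s7 hu (by linarith)).mono_set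
      (uIcc_subset_uIcc_left (by simp [uIcc_of_le, hx₀, hx₁]))
  calc ∫ t in (0:ℝ)..x, t ^ (u - 1) * (1 - t) ^ (v - 1)
      ≤ ∫ t in (0:ℝ)..x, t ^ (u - 1) :=
        intervalIntegral.integral_mono_on hx₀ hint
          (intervalIntegral.intervalIntegrable_rpow' (by linarith)) fun t ht ↦
          mul_le_of_le_one_right (rpow_nonneg ht.1 _)
            (rpow_le_one (by linarith [ht.2]) (by linarith [ht.1]) (by linarith))
    _ = x ^ u / u := by
      rw [integral_rpow (Or.inl (by linarith)), sub_add_cancel, zero_rpow hu.ne', sub_zero]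

lemma regIncBeta_le_add_one_mul_rpow {x u v : ℝ} (hx₀ : 0 ≤ x) (hx₁ : x ≤ 1) (hu : 0 < u)
    (hv₁ : 1 ≤ v) (hv₂ : v ≤ 2) : regIncBeta x u v ≤ (u + 1) * x ^ u := by
  have hbeta : (u * (u + 1))⁻¹ ≤ beta u v :=
    beta_two_right hu ▸ beta_le_beta_of_le_right hu (by linarith) hv₂
  rw [regIncBeta_eq_div_beta]
  calc (∫ t in (0:ℝ)..x, t ^ (u - 1) * (1 - t) ^ (v - 1)) / beta u v
      ≤ x ^ u / u / (u * (u + 1))⁻¹ :=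
        div_le_div₀ (by positivity) (integral_rpow_mul_one_sub_rpow_le hx₀ hx₁ hu hv₁)
          (by positivity) hbeta
    _ = (u + 1) * x ^ u := by field_simp

lemma regIncBeta_half_le_add_one_mul_half_pow {k : ℕ} (hk : 1 ≤ k) {ε : ℝ} (hε₀ : 0 < ε)
    (hε₁ : ε ≤ 1) :
    regIncBeta (1/2) ((k:ℝ) - 1 + ε) (1 + ε) ≤ ((k:ℝ) + 1) * (1/2) ^ (k - 1) := by
  have hk' : (1:ℝ) ≤ k := by exact_mod_cast hk
  calc regIncBeta (1/2) ((k:ℝ) - 1 + ε) (1 + ε)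
      ≤ ((k:ℝ) - 1 + ε + 1) * (1/2) ^ ((k:ℝ) - 1 + ε) :=
        regIncBeta_le_add_one_mul_rpow (by norm_num) (by norm_num) (by linarith) (by linarith)
          (by linarith)
    _ ≤ ((k:ℝ) + 1) * (1/2) ^ ((k:ℝ) - 1) :=
        mul_le_mul (by linarith) (rpow_le_rpow_of_exponent_ge (by norm_num) (by norm_num)
          (by linarith)) (by positivity) (by linarith)
    _ = ((k:ℝ) + 1) * (1/2) ^ (k - 1) := by
        rw [← rpow_natCast, Nat.cast_sub hk, Nat.cast_one]

/-- Upper bound on the asymptotic probability of estimating the k-th infected node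
as the source, for d-regular trees. -/
theorem Pk_upper_bound (d k : ℕ) (hd : 3 ≤ d) (hk : 2 ≤ k) :
    regIncBeta (1/2) ((k : ℝ) - 1 + 1 / ((d : ℝ) - 2)) (1 + 1 / ((d : ℝ) - 2))
      + ((d : ℝ) - 1) *
        (regIncBeta (1/2) (1 / ((d : ℝ) - 2)) ((k : ℝ) + 1 / ((d : ℝ) - 2)) - 1)
    ≤ 4 * Real.exp 1 ^ 2 * ((k : ℝ) * ((k : ℝ) + 1) / ((k : ℝ) - 1)) * (1/2) ^ (k - 1) := by
  have hd' : (3:ℝ) ≤ d := by exact_mod_cast hd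
  have hk' : (2:ℝ) ≤ k := by exact_mod_cast hk
  set ε : ℝ := 1 / ((d:ℝ) - 2)
  have hε₀ : 0 < ε := one_div_pos.2 (by linarith)
  have hε₁ : ε ≤ 1 := (div_le_one (by linarith)).2 (by linarith)
  have h_second : ((d:ℝ) - 1) * (regIncBeta (1/2) ε ((k:ℝ) + ε) - 1) ≤ 0 :=
    mul_nonpos_of_nonneg_of_nonpos (by linarith)
      (sub_nonpos.2 (regIncBeta_le_one (by norm_num) (by norm_num) hε₀ (by linarith)))
  have h_const : (k:ℝ) + 1 ≤ 4 * exp 1 ^ 2 * ((k:ℝ) * ((k:ℝ) + 1) / ((k:ℝ) - 1)) := by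
    have h_exp : 1 ≤ 4 * exp 1 ^ 2 := by nlinarith [one_le_exp zero_le_one]
    have h_frac : (k:ℝ) + 1 ≤ (k:ℝ) * ((k:ℝ) + 1) / ((k:ℝ) - 1) := by
      rw [le_div_iff₀ (by linarith)]
      nlinarith
    exact h_frac.trans (le_mul_of_one_le_left (by linarith) h_exp)
  have h_first := regIncBeta_half_le_add_one_mul_half_pow (by omega : 1 ≤ k) hε₀ hε₁
  calc _ ≤ ((k:ℝ) + 1) * (1/2) ^ (k - 1) := by linarith
    _ ≤ _ := by gcongr
end

section
/- Let P(t) be a renewal process whose i.i.d. nonnegative holding times X have mean μ > 0 and finite moment generating function E[e^{θX}] < ∞ for |θ| < ε. Then there exist constants c > 0 and ε' > 0 such that for all t > 0 and all γ ∈ (0, ε'), P(|P(t) − t/μ| ≥ tγ/μ) ≤ 2 exp(−γ²μt/(8c)). -/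
/-!
For nonnegative `X` the inequality `e^u ≤ 1 + u + u² e^|u|` gives
`E[e^{θX}] ≤ exp (θμ + Cθ²)` for `|θ| ≤ ε/2`, where `C ≥ E[X² e^{εX/2}]`; by independence
`E[e^{θ S_n}] ≤ exp (n (θμ + Cθ²))` for the partial sums `S_n`. Since `N(t) ≥ n ↔ S_n ≤ t`,
a large deviation of `N(t)` above `t/μ` forces `S_n ≤ t` for `n = ⌈(t + tγ)/μ⌉`, and one below
forces `S_m ≥ t` for `m = ⌊(t - tγ)/μ⌋ + 1`. Chernoff's inequality with `θ = γμ/(8C)` bounds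
both events by `exp (-γ²μt/(128C))`.
-/

open MeasureTheory ProbabilityTheory Real

lemma Real.exp_sub_one_le_mul_exp (u : ℝ) : exp u - 1 ≤ u * exp u := by
  have h := mul_le_mul_of_nonneg_left (one_sub_le_exp_neg u) (exp_pos u).le
  rw [← exp_add, add_neg_cancel, exp_zero] at h
  linarith

lemma Real.exp_le_one_add_add_sq_mul_exp_abs (u : ℝ) : exp u ≤ 1 + u + u ^ 2 * exp |u| := by
  have h := exp_sub_one_le_mul_exp u
  rcases le_total 0 u with hu | hu
  · rw [abs_of_nonneg hu]
    nlinarith [mul_le_mul_of_nonneg_left h hu]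
  · rw [abs_of_nonpos hu]
    nlinarith [add_one_le_exp u, one_le_exp (neg_nonneg.2 hu), sq_nonneg u]

lemma setOf_le_abs_sub_subset {Ω : Type*} {N : Ω → ℕ} {S : ℕ → Ω → ℝ} {t : ℝ}
    (hN : ∀ ω n, n ≤ N ω ↔ S n ω ≤ t) (a b : ℝ) :
    {ω | a ≤ |(N ω : ℝ) - b|} ⊆ {ω | S ⌈b + a⌉₊ ω ≤ t} ∪ {ω | t ≤ S (⌊b - a⌋₊ + 1) ω} := by
  intro ω (hω : a ≤ |(N ω : ℝ) - b|)
  rcases le_abs.1 hω with hfar | hnear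
  · exact Or.inl ((hN ω _).1 (Nat.ceil_le.2 (by linarith)))
  · have hfloor : N ω ≤ ⌊b - a⌋₊ := Nat.le_floor (by linarith)
    refine Or.inr (show t ≤ _ from le_of_lt (not_le.1 fun h ↦ ?_))
    have := (hN ω _).2 h
    omega

section

variable {Ω : Type*} [MeasurableSpace Ω] {P : Measure Ω}

lemma mgf_le_one_add_mul_add_sq_mul_of_nonneg [IsProbabilityMeasure P] {X : Ω → ℝ}
    (hX : ∀ ω, 0 ≤ X ω) {θ δ : ℝ} (hθ : |θ| ≤ δ) (hX_int : Integrable X P)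
    (hexp : Integrable (fun ω ↦ exp (θ * X ω)) P)
    (hsq : Integrable (fun ω ↦ X ω ^ 2 * exp (δ * X ω)) P) :
    mgf X P θ ≤ 1 + θ * P[X] + θ ^ 2 * P[fun ω ↦ X ω ^ 2 * exp (δ * X ω)] := by
  have hpoint : ∀ ω, exp (θ * X ω) ≤ 1 + θ * X ω + θ ^ 2 * (X ω ^ 2 * exp (δ * X ω)) := by
    intro ω
    have habs : |θ * X ω| ≤ δ * X ω := by
      rw [abs_mul, abs_of_nonneg (hX ω)]
      exact mul_le_mul_of_nonneg_right hθ (hX ω)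
    calc exp (θ * X ω) ≤ 1 + θ * X ω + (θ * X ω) ^ 2 * exp |θ * X ω| :=
          exp_le_one_add_add_sq_mul_exp_abs _
      _ ≤ 1 + θ * X ω + (θ * X ω) ^ 2 * exp (δ * X ω) := by gcongr
      _ = 1 + θ * X ω + θ ^ 2 * (X ω ^ 2 * exp (δ * X ω)) := by ring
  have hlin : Integrable (fun ω ↦ 1 + θ * X ω) P := (integrable_const 1).add (hX_int.const_mul θ)
  calc mgf X P θ ≤ ∫ ω, 1 + θ * X ω + θ ^ 2 * (X ω ^ 2 * exp (δ * X ω)) ∂P :=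
        integral_mono hexp (hlin.add (hsq.const_mul _)) hpoint
    _ = 1 + θ * P[X] + θ ^ 2 * P[fun ω ↦ X ω ^ 2 * exp (δ * X ω)] := by
        rw [integral_add hlin (hsq.const_mul _), integral_add (integrable_const 1)
          (hX_int.const_mul θ), integral_const_mul, integral_const_mul]
        simp

lemma mgf_le_exp_of_nonneg [IsProbabilityMeasure P] {X : Ω → ℝ} (hX : ∀ ω, 0 ≤ X ω)
    {θ δ C : ℝ} (hθ : |θ| ≤ δ) (hX_int : Integrable X P)
    (hexp : Integrable (fun ω ↦ exp (θ * X ω)) P)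
    (hsq : Integrable (fun ω ↦ X ω ^ 2 * exp (δ * X ω)) P)
    (hC : P[fun ω ↦ X ω ^ 2 * exp (δ * X ω)] ≤ C) :
    mgf X P θ ≤ exp (θ * P[X] + C * θ ^ 2) := by
  refine (mgf_le_one_add_mul_add_sq_mul_of_nonneg hX hθ hX_int hexp hsq).trans ?_
  nlinarith [add_one_le_exp (θ * P[X] + C * θ ^ 2), sq_nonneg θ]

def HasMGFBound (S : ℕ → Ω → ℝ) (P : Measure Ω) (μ C δ : ℝ) : Prop :=
  ∀ n : ℕ, ∀ θ, |θ| ≤ δ →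
    Integrable (fun ω ↦ exp (θ * S n ω)) P ∧ mgf (S n) P θ ≤ exp (n * (θ * μ + C * θ ^ 2))

lemma hasMGFBound_sum_range {X : ℕ → Ω → ℝ} (hindep : iIndepFun X P)
    (hmeas : ∀ i, Measurable (X i)) (hident : ∀ i, IdentDistrib (X i) (X 0) P P)
    {μ C δ ε : ℝ} (hδε : δ < ε)
    (hexp : ∀ θ, |θ| < ε → Integrable (fun ω ↦ exp (θ * X 0 ω)) P)
    (hmgf : ∀ θ, |θ| ≤ δ → mgf (X 0) P θ ≤ exp (θ * μ + C * θ ^ 2)) :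
    HasMGFBound (fun n ω ↦ ∑ i ∈ Finset.range n, X i ω) P μ C δ := by
  have := hindep.isProbabilityMeasure
  intro n θ hθ
  simp only [← Finset.sum_apply]
  constructor
  · refine hindep.integrable_exp_mul_sum hmeas fun i _ ↦ ?_
    exact ((hident i).comp (measurable_const_mul θ).exp).integrable_iff.2
      (hexp θ (hθ.trans_lt hδε))
  · rw [hindep.mgf_sum hmeas, Finset.prod_congr rfl fun i _ ↦
      mgf_congr_of_identDistrib _ _ (hident i) θ, Finset.prod_const, Finset.card_range,
      exp_nat_mul]
    exact pow_le_pow_left₀ mgf_nonneg (hmgf θ hθ) n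

lemma exists_hasMGFBound_sum_range {X : ℕ → Ω → ℝ} (hindep : iIndepFun X P)
    (hmeas : ∀ i, Measurable (X i)) (hident : ∀ i, IdentDistrib (X i) (X 0) P P)
    (hX₀ : ∀ ω, 0 ≤ X 0 ω) (hX₀_int : Integrable (X 0) P) {ε : ℝ} (hε : 0 < ε)
    (hexp : ∀ θ, |θ| < ε → Integrable (fun ω ↦ exp (θ * X 0 ω)) P) :
    ∃ C, P[X 0] ^ 2 ≤ C ∧
      HasMGFBound (fun n ω ↦ ∑ i ∈ Finset.range n, X i ω) P P[X 0] C (ε / 2) := by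
  have := hindep.isProbabilityMeasure
  have hsq : Integrable (fun ω ↦ X 0 ω ^ 2 * exp (ε / 2 * X 0 ω)) P :=
    integrable_pow_mul_exp_of_integrable_exp_mul (t := ε / 4) (by positivity)
      (hexp _ (by rw [abs_of_pos (by positivity)]; linarith))
      (hexp _ (by rw [abs_of_pos (by linarith)]; linarith)) 2
  refine ⟨max P[fun ω ↦ X 0 ω ^ 2 * exp (ε / 2 * X 0 ω)] (P[X 0] ^ 2), le_max_right _ _,
    hasMGFBound_sum_range hindep hmeas hident (half_lt_self hε) hexp fun θ hθ ↦ ?_⟩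
  exact mgf_le_exp_of_nonneg hX₀ hθ hX₀_int (hexp θ (by linarith)) hsq (le_max_left _ _)

namespace HasMGFBound

variable [IsProbabilityMeasure P] {S : ℕ → Ω → ℝ} {μ C δ θ : ℝ}

lemma measureReal_le_le (hS : HasMGFBound S P μ C δ) (hθ₀ : 0 ≤ θ) (hθδ : θ ≤ δ) (n : ℕ)
    (a : ℝ) : P.real {ω | S n ω ≤ a} ≤ exp (θ * a + n * (-(θ * μ) + C * θ ^ 2)) := by
  have habs : |-θ| ≤ δ := by rwa [abs_neg, abs_of_nonneg hθ₀]
  obtain ⟨hint, hmgf⟩ := hS n (-θ) habs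
  refine (measure_le_le_exp_mul_mgf a (neg_nonpos.2 hθ₀) hint).trans ?_
  rw [neg_neg, exp_add]
  gcongr
  rwa [neg_mul, neg_sq] at hmgf

lemma measureReal_ge_le (hS : HasMGFBound S P μ C δ) (hθ₀ : 0 ≤ θ) (hθδ : θ ≤ δ) (n : ℕ)
    (a : ℝ) : P.real {ω | a ≤ S n ω} ≤ exp (-(θ * a) + n * (θ * μ + C * θ ^ 2)) := by
  obtain ⟨hint, hmgf⟩ := hS n θ (by rwa [abs_of_nonneg hθ₀])
  refine (measure_ge_le_exp_mul_mgf a hθ₀ hint).trans ?_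
  rw [exp_add, ← neg_mul]
  gcongr

lemma measureReal_le_le_exp_of_ge (hS : HasMGFBound S P μ C δ) (hμ : 0 < μ) (hC : 0 < C)
    {t γ : ℝ} (ht : 0 ≤ t) (hγ₀ : 0 < γ) (hγ₁ : γ ≤ 1) (hθδ : γ * μ / (8 * C) ≤ δ) {n : ℕ}
    (hn : t / μ + t * γ / μ ≤ n) :
    P.real {ω | S n ω ≤ t} ≤ exp (-(γ ^ 2 * μ * t) / (8 * (16 * C))) := by
  set θ := γ * μ / (8 * C) with hθ
  have hθ₀ : 0 < θ := by positivity
  have hCθ : C * θ = γ * μ / 8 := by rw [hθ]; field_simp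
  have hrate : -(θ * μ) + C * θ ^ 2 = -(θ * μ * (1 - γ / 8)) := by
    linear_combination θ * hCθ
  refine (hS.measureReal_le_le hθ₀.le hθδ n t).trans (exp_le_exp.2 ?_)
  have hn' : (t + t * γ) * θ ≤ n * (θ * μ) := by
    rw [← add_div, div_le_iff₀ hμ] at hn; nlinarith
  have htarget : -(γ ^ 2 * μ * t) / (8 * (16 * C)) = -(γ * θ * t / 16) := by
    rw [hθ]; field_simp
  rw [hrate, htarget]
  nlinarith [mul_le_mul_of_nonneg_right hn' (by linarith : (0 : ℝ) ≤ 1 - γ / 8),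
    mul_nonneg (mul_nonneg hθ₀.le hγ₀.le) ht]

lemma measureReal_ge_le_exp_of_le (hS : HasMGFBound S P μ C δ) (hμ : 0 < μ) (hC : 0 < C)
    {t γ : ℝ} (hγ₀ : 0 < γ) (hγt : 2 * μ ≤ γ * t) (hθδ : γ * μ / (8 * C) ≤ δ) {m : ℕ}
    (hm : m ≤ t / μ - t * γ / μ + 1) :
    P.real {ω | t ≤ S m ω} ≤ exp (-(γ ^ 2 * μ * t) / (8 * (16 * C))) := by
  set θ := γ * μ / (8 * C) with hθ
  have hθ₀ : 0 < θ := by positivity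
  have hCθ : C * θ = γ * μ / 8 := by rw [hθ]; field_simp
  have hrate : θ * μ + C * θ ^ 2 = θ * μ * (1 + γ / 8) := by
    linear_combination θ * hCθ
  refine (hS.measureReal_ge_le hθ₀.le hθδ m t).trans (exp_le_exp.2 ?_)
  have hm' : m * (θ * μ) ≤ (t - t * γ + μ) * θ := by
    rw [← sub_div, div_add_one hμ.ne', le_div_iff₀ hμ] at hm; nlinarith
  have htarget : -(γ ^ 2 * μ * t) / (8 * (16 * C)) = -(γ * θ * t / 16) := by
    rw [hθ]; field_simp
  have hγt₀ : 0 ≤ γ * t := by linarith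
  rw [hrate, htarget]
  nlinarith [mul_le_mul_of_nonneg_right hm' (by linarith : (0 : ℝ) ≤ 1 + γ / 8),
    mul_le_mul_of_nonneg_left hγt (by positivity : (0 : ℝ) ≤ θ * (1 + γ / 8)),
    mul_nonneg hθ₀.le hγt₀, mul_nonneg (mul_nonneg hθ₀.le hγt₀) hγ₀.le]

theorem measure_le_abs_sub_le (hS : HasMGFBound S P μ C δ) (hμ : 0 < μ) (hCμ : μ ^ 2 ≤ C)
    {N : Ω → ℕ} {t γ : ℝ} (hN : ∀ ω n, n ≤ N ω ↔ S n ω ≤ t) (ht : 0 < t) (hγ₀ : 0 < γ)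
    (hγ₁ : γ ≤ 1) (hθδ : γ * μ / (8 * C) ≤ δ) :
    P {ω | t * γ / μ ≤ |(N ω : ℝ) - t / μ|}
      ≤ ENNReal.ofReal (2 * exp (-(γ ^ 2 * μ * t) / (8 * (16 * C)))) := by
  have hC : 0 < C := (by positivity : 0 < μ ^ 2).trans_le hCμ
  rw [← ofReal_measureReal]
  refine ENNReal.ofReal_le_ofReal ?_
  -- Below `log 2` the bound exceeds `1`; above it `γt ≥ 2μ`, which absorbs the `+ 1` of the
  -- floor index.
  rcases le_or_gt (γ ^ 2 * μ * t / (8 * (16 * C))) (log 2) with hsmall | hlarge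
  · refine measureReal_le_one.trans ?_
    have := exp_le_exp.2 (neg_le_neg hsmall)
    rw [exp_neg, exp_log two_pos, ← neg_div] at this
    linarith
  · have hγt : 2 * μ ≤ γ * t := by
      rw [lt_div_iff₀ (by positivity)] at hlarge
      nlinarith [log_two_gt_d9, mul_le_mul_of_nonneg_left hγ₁ (mul_pos hμ ht).le]
    have hfloor : (⌊t / μ - t * γ / μ⌋₊ : ℝ) ≤ t / μ - t * γ / μ :=
      Nat.floor_le (by rw [← sub_div]; exact div_nonneg (by nlinarith) hμ.le)
    calc P.real {ω | t * γ / μ ≤ |(N ω : ℝ) - t / μ|}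
        ≤ P.real {ω | S ⌈t / μ + t * γ / μ⌉₊ ω ≤ t}
          + P.real {ω | t ≤ S (⌊t / μ - t * γ / μ⌋₊ + 1) ω} :=
          (measureReal_mono (setOf_le_abs_sub_subset hN _ _)).trans (measureReal_union_le _ _)
      _ ≤ exp (-(γ ^ 2 * μ * t) / (8 * (16 * C))) + exp (-(γ ^ 2 * μ * t) / (8 * (16 * C))) :=
          add_le_add (hS.measureReal_le_le_exp_of_ge hμ hC ht.le hγ₀ hγ₁ hθδ (Nat.le_ceil _))
            (hS.measureReal_ge_le_exp_of_le hμ hC hγ₀ hγt hθδ (by push_cast; linarith))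
      _ = 2 * exp (-(γ ^ 2 * μ * t) / (8 * (16 * C))) := by ring

end HasMGFBound

end

/-- Concentration of a renewal process: if the i.i.d. nonnegative holding times have
mean `μ > 0` and a moment generating function finite on `(-ε, ε)`, then there are
`c > 0` and `ε' > 0` such that for all `t > 0` and `γ ∈ (0, ε')`,
`P(|N(t) − t/μ| ≥ tγ/μ) ≤ 2·exp(−γ²μt/(8c))`. -/
theorem renewal_process_concentration {Ω : Type*} [MeasurableSpace Ω] (P : Measure Ω)
    [IsProbabilityMeasure P] (X : ℕ → Ω → ℝ) (μ ε : ℝ) (hμ : 0 < μ) (hε : 0 < ε)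
    (hmeas : ∀ i, Measurable (X i))
    (hindep : iIndepFun X P)
    (hident : ∀ i j, IdentDistrib (X i) (X j) P P)
    (hnonneg : ∀ i ω, 0 ≤ X i ω)
    (hmean : ∀ i, ∫ ω, X i ω ∂P = μ)
    (hmgf : ∀ θ : ℝ, |θ| < ε → Integrable (fun ω => Real.exp (θ * X 0 ω)) P)
    -- `N t ω` is the renewal counting process: `n ≤ N t ω ↔ S_n ≤ t`.
    (N : ℝ → Ω → ℕ)
    (hN : ∀ t : ℝ, 0 ≤ t → ∀ ω : Ω, ∀ n : ℕ,
      n ≤ N t ω ↔ ∑ i ∈ Finset.range n, X i ω ≤ t) :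
    ∃ c > (0:ℝ), ∃ ε' > (0:ℝ), ∀ t > (0:ℝ), ∀ γ ∈ Set.Ioo (0:ℝ) ε',
      P {ω | t * γ / μ ≤ |(N t ω : ℝ) - t / μ|}
        ≤ ENNReal.ofReal (2 * Real.exp (-(γ ^ 2 * μ * t) / (8 * c))) := by
  have hX₀_int : Integrable (X 0) P :=
    Integrable.of_integral_ne_zero (by rw [hmean 0]; exact hμ.ne')
  obtain ⟨C, hCμ, hS⟩ := exists_hasMGFBound_sum_range hindep hmeas (fun i ↦ hident i 0)
    (hnonneg 0) hX₀_int hε hmgf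
  rw [hmean 0] at hCμ hS
  have hC : 0 < C := (by positivity : 0 < μ ^ 2).trans_le hCμ
  refine ⟨16 * C, by positivity, min 1 (4 * C * ε / μ), by positivity, fun t ht γ hγ ↦ ?_⟩
  have hγε : γ * μ ≤ 4 * C * ε := (le_div_iff₀ hμ).1 (hγ.2.le.trans (min_le_right _ _))
  refine hS.measure_le_abs_sub_le hμ hCμ (hN t ht.le) ht hγ.1
    (hγ.2.le.trans (min_le_left _ _)) ?_
  rw [div_le_iff₀ (by positivity)]
  linarith
end
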